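/- arXiv:1612.03335 — 2 statements merged into one kernel-verified Lean document; each statement's English description precedes it below -/
import Mathlib

section
/- Every subgroup of the Klein bottle group ⟨x, y | y x y⁻¹ = x⁻¹⟩ is isomorphic to the trivial group, ℤ, ℤ × ℤ, or the Klein bottle group itself. -/
namespace KBAux

/-! ### The sign function `e b = (-1)^b` -/

def e (b : ℤ) : ℤ := ((-1 : ℤˣ) ^ b : ℤˣ)

lemma e_add (b c : ℤ) : e (b + c) = e b * e c := by
  simp [e, zpow_add]

lemma e_zero : e 0 = 1 := by simp [e]

lemma e_one : e 1 = -1 := by simp [e]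

lemma e_even {b : ℤ} (h : Even b) : e b = 1 := by
  obtain ⟨k, rfl⟩ := h
  have h2 : k + k = 2 * k := by ring
  have h3 : ((-1 : ℤˣ) ^ (2 : ℤ)) = 1 := by decide
  unfold e
  rw [h2, zpow_mul, h3, one_zpow, Units.val_one]

lemma e_odd {b : ℤ} (h : Odd b) : e b = -1 := by
  obtain ⟨k, rfl⟩ := h
  rw [e_add, e_one, e_even ⟨k, by ring⟩, one_mul]

lemma e_mul_even {m : ℤ} (hm : Even m) (q : ℤ) : e (m * q) = 1 :=
  e_even (hm.mul_right q)

lemma e_mul_odd {m : ℤ} (hm : Odd m) (q : ℤ) : e (m * q) = e q := by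
  rcases Int.even_or_odd q with h | h
  · rw [e_even h, e_even (h.mul_left m)]
  · rw [e_odd h, e_odd (hm.mul h)]

/-! ### The concrete Klein bottle group `ℤ ⋊ ℤ` -/

@[ext]
structure KB where
  u : ℤ
  v : ℤ

instance : Group KB where
  mul p q := ⟨p.u + e p.v * q.u, p.v + q.v⟩
  one := ⟨0, 0⟩
  inv p := ⟨-(e p.v * p.u), -p.v⟩
  mul_assoc a b c := by
    refine KB.ext ?_ ?_
    · show a.u + e a.v * b.u + e (a.v + b.v) * c.u
        = a.u + e a.v * (b.u + e b.v * c.u)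
      rw [e_add]; ring
    · show a.v + b.v + c.v = a.v + (b.v + c.v); ring
  one_mul a := by
    refine KB.ext ?_ ?_
    · show (0 : ℤ) + e 0 * a.u = a.u; rw [e_zero]; ring
    · show (0 : ℤ) + a.v = a.v; ring
  mul_one a := by
    refine KB.ext ?_ ?_
    · show a.u + e a.v * 0 = a.u; ring
    · show a.v + 0 = a.v; ring
  inv_mul_cancel a := by
    refine KB.ext ?_ ?_
    · show -(e a.v * a.u) + e (-a.v) * a.u = 0
      have : e (-a.v) * e a.v = 1 := by rw [← e_add]; simp [e_zero]
      have h2 : e (-a.v) = e a.v := by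
        rcases Int.even_or_odd a.v with h | h
        · rw [e_even h, e_even h.neg]
        · rw [e_odd h, e_odd h.neg]
      rw [h2]; ring
    · show -a.v + a.v = 0; ring

lemma mul_u (p q : KB) : (p * q).u = p.u + e p.v * q.u := rfl
lemma mul_v (p q : KB) : (p * q).v = p.v + q.v := rfl
lemma one_u : (1 : KB).u = 0 := rfl
lemma one_v : (1 : KB).v = 0 := rfl
lemma inv_u (p : KB) : (p⁻¹).u = -(e p.v * p.u) := rfl
lemma inv_v (p : KB) : (p⁻¹).v = -p.v := rfl
lemma one_def : (1 : KB) = ⟨0, 0⟩ := rfl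

lemma zpow_v (g : KB) (z : ℤ) : (g ^ z).v = z * g.v := by
  induction z using Int.induction_on with
  | zero => simp [one_v]
  | succ k ih => rw [zpow_add_one, mul_v, ih]; ring
  | pred k ih => rw [zpow_sub_one, mul_v, inv_v, ih]; ring

lemma zpow_even {a m : ℤ} (hm : Even m) (z : ℤ) :
    (⟨a, m⟩ : KB) ^ z = ⟨a * z, m * z⟩ := by
  induction z using Int.induction_on with
  | zero => ext <;> simp [one_u, one_v]
  | succ k ih =>
    rw [zpow_add_one, ih]; ext
    · simp only [mul_u, e_mul_even hm]; ring
    · simp only [mul_v]; ring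
  | pred k ih =>
    rw [zpow_sub_one, ih]; ext
    · simp only [mul_u, inv_u, inv_v, e_mul_even hm, e_even hm]; ring
    · simp only [mul_v, inv_v]; ring

lemma zpow_odd {a m : ℤ} (hm : Odd m) (z : ℤ) :
    (⟨a, m⟩ : KB) ^ z = ⟨a * (z % 2), m * z⟩ := by
  induction z using Int.induction_on with
  | zero => ext <;> simp [one_u, one_v]
  | succ k ih =>
    rw [zpow_add_one, ih]; ext
    · simp only [mul_u, e_mul_odd hm]
      rcases Int.even_or_odd (k : ℤ) with h | h
      · rw [e_even h]
        have h0 : (k : ℤ) % 2 = 0 := Int.even_iff.mp h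
        have h1 : ((k : ℤ) + 1) % 2 = 1 := by omega
        rw [h0, h1]; ring
      · rw [e_odd h]
        have h0 : (k : ℤ) % 2 = 1 := Int.odd_iff.mp h
        have h1 : ((k : ℤ) + 1) % 2 = 0 := by omega
        rw [h0, h1]; ring
    · simp only [mul_v]; ring
  | pred k ih =>
    rw [zpow_sub_one, ih]; ext
    · simp only [mul_u, inv_u, inv_v, e_mul_odd hm, e_odd hm]
      rcases Int.even_or_odd (-(k : ℤ)) with h | h
      · rw [e_even h]
        have h0 : (-(k : ℤ)) % 2 = 0 := Int.even_iff.mp h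
        have h1 : (-(k : ℤ) - 1) % 2 = 1 := by omega
        rw [h0, h1]; ring
      · rw [e_odd h]
        have h0 : (-(k : ℤ)) % 2 = 1 := Int.odd_iff.mp h
        have h1 : (-(k : ℤ) - 1) % 2 = 0 := by omega
        rw [h0, h1]; ring
    · simp only [mul_v, inv_v]; ring

/-! ### Helper for producing isomorphisms of subgroups -/

lemma iso_of_range {G A : Type*} [Group G] [Group A] {Γ : Subgroup G}
    (f : A →* G) (hinj : Function.Injective f) (hr : f.range = Γ) :
    Nonempty (Γ ≃* A) :=
  ⟨((MonoidHom.ofInjective hinj).trans (MulEquiv.subgroupCongr hr)).symm⟩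

/-! ### Classification of subgroups of `KB` -/

theorem kb_subgroup (Γ : Subgroup KB) :
    Subsingleton Γ ∨ Nonempty (Γ ≃* Multiplicative ℤ) ∨
      Nonempty (Γ ≃* Multiplicative ℤ × Multiplicative ℤ) ∨
      Nonempty (Γ ≃* KB) := by
  classical
  -- the subgroup of first coordinates of elements with second coordinate 0
  set H : AddSubgroup ℤ :=
    { carrier := {c | (⟨c, 0⟩ : KB) ∈ Γ}
      zero_mem' := Γ.one_mem
      add_mem' := by
        intro c d hc hd
        have key : (⟨c, 0⟩ : KB) * ⟨d, 0⟩ = ⟨c + d, 0⟩ := by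
          ext
          · simp only [mul_u, e_zero]; ring
          · simp only [mul_v]; ring
        have := Γ.mul_mem hc hd
        rwa [key] at this
      neg_mem' := by
        intro c hc
        have key : (⟨c, 0⟩ : KB)⁻¹ = ⟨-c, 0⟩ := by
          ext
          · simp only [inv_u, e_zero]; ring
          · simp only [inv_v]; ring
        have := Γ.inv_mem hc
        rwa [key] at this } with hHdef
  -- the subgroup of second coordinates
  set S : AddSubgroup ℤ :=
    { carrier := {b | ∃ a, (⟨a, b⟩ : KB) ∈ Γ}
      zero_mem' := ⟨0, Γ.one_mem⟩
      add_mem' := by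
        rintro b b' ⟨a, ha⟩ ⟨a', ha'⟩
        exact ⟨a + e b * a', Γ.mul_mem ha ha'⟩
      neg_mem' := by
        rintro b ⟨a, ha⟩
        exact ⟨-(e b * a), Γ.inv_mem ha⟩ } with hSdef
  obtain ⟨n, hH⟩ := Int.subgroup_cyclic H
  obtain ⟨m, hS⟩ := Int.subgroup_cyclic S
  have hHmem : ∀ c : ℤ, c ∈ H ↔ ∃ k : ℤ, k * n = c := by
    intro c; rw [hH, AddSubgroup.mem_closure_singleton]
    simp [zsmul_eq_mul]
  have hSmem : ∀ b : ℤ, b ∈ S ↔ ∃ k : ℤ, k * m = b := by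
    intro b; rw [hS, AddSubgroup.mem_closure_singleton]
    simp [zsmul_eq_mul]
  have hmemH : ∀ c : ℤ, ((⟨c, 0⟩ : KB) ∈ Γ) ↔ c ∈ H := fun c => Iff.rfl
  have hmemS : ∀ g : KB, g ∈ Γ → g.v ∈ S := fun g hg => ⟨g.u, hg⟩
  by_cases hm0 : m = 0
  · -- all elements have second coordinate 0
    have hv0 : ∀ g : KB, g ∈ Γ → g.v = 0 := by
      intro g hg
      obtain ⟨k, hk⟩ := (hSmem g.v).mp (hmemS g hg)
      rw [hm0, mul_zero] at hk
      omega
    by_cases hn0 : n = 0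
    · -- trivial
      left
      constructor
      rintro ⟨g, hg⟩ ⟨g', hg'⟩
      have key : ∀ x : KB, x ∈ Γ → x = 1 := by
        intro x hx
        have h2 : x.v = 0 := hv0 x hx
        have h3 : x.u ∈ H := by
          rw [← hmemH]
          have : (⟨x.u, x.v⟩ : KB) ∈ Γ := hx
          rwa [h2] at this
        obtain ⟨k, hk⟩ := (hHmem x.u).mp h3
        rw [hn0, mul_zero] at hk
        have h4 : x.u = 0 := by omega
        ext <;> simp [h4, h2, one_u, one_v]
      refine Subtype.ext ?_
      show g = g'
      rw [key g hg, key g' hg']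
    · -- infinite cyclic generated by (n, 0)
      right; left
      have hnΓ : (⟨n, 0⟩ : KB) ∈ Γ := by
        rw [hmemH, hHmem]; exact ⟨1, one_mul n⟩
      refine iso_of_range (zpowersHom KB ⟨n, 0⟩) ?_ ?_
      · rw [injective_iff_map_eq_one]
        intro z hz
        rw [zpowersHom_apply, zpow_even (Even.zero)] at hz
        have := congrArg KB.u hz
        simp only [one_u] at this
        have hz0 : Multiplicative.toAdd z = 0 := by
          rcases mul_eq_zero.mp this with h | h
          · exact absurd h hn0
          · exact h
        apply Multiplicative.toAdd.injective
        simpa using hz0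
      · ext g
        simp only [MonoidHom.mem_range, zpowersHom_apply]
        constructor
        · rintro ⟨z, rfl⟩
          exact Γ.zpow_mem hnΓ _
        · intro hg
          have h2 : g.v = 0 := hv0 g hg
          have h3 : g.u ∈ H := by
            rw [← hmemH]
            have : (⟨g.u, g.v⟩ : KB) ∈ Γ := hg
            rwa [h2] at this
          obtain ⟨k, hk⟩ := (hHmem g.u).mp h3
          refine ⟨Multiplicative.ofAdd k, ?_⟩
          rw [zpow_even (Even.zero)]
          ext
          · simp only []
            show n * Multiplicative.toAdd (Multiplicative.ofAdd k) = g.u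
            simpa [mul_comm] using hk
          · show (0 : ℤ) * Multiplicative.toAdd (Multiplicative.ofAdd k) = g.v
            simp [h2]
  · -- m ≠ 0 : pick (a, m) ∈ Γ
    have hmS : m ∈ S := (hSmem m).mpr ⟨1, one_mul m⟩
    obtain ⟨a, hA⟩ : ∃ a, (⟨a, m⟩ : KB) ∈ Γ := hmS
    set A : KB := (⟨a, m⟩ : KB) with hAdef
    -- decomposition of arbitrary elements of Γ
    have decomp : ∀ g : KB, g ∈ Γ → ∃ p q : ℤ, g = (⟨n * p, 0⟩ : KB) * A ^ q := by
      intro g hg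
      obtain ⟨q, hq⟩ := (hSmem g.v).mp (hmemS g hg)
      have hw : g * (A ^ q)⁻¹ ∈ Γ := Γ.mul_mem hg (Γ.inv_mem (Γ.zpow_mem hA q))
      set w : KB := g * (A ^ q)⁻¹ with hwdef
      have hwv : w.v = 0 := by
        rw [hwdef, mul_v, inv_v, zpow_v]
        show g.v + -(q * A.v) = 0
        have : A.v = m := rfl
        rw [this]; omega
      have hwu : w.u ∈ H := by
        rw [← hmemH]
        have : (⟨w.u, w.v⟩ : KB) ∈ Γ := hw
        rwa [hwv] at this
      obtain ⟨p, hp⟩ := (hHmem w.u).mp hwu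
      refine ⟨p, q, ?_⟩
      have hweq : w = ⟨n * p, 0⟩ := by
        ext
        · rw [← hp]; ring
        · exact hwv
      rw [← hweq, hwdef, inv_mul_cancel_right]
    by_cases hn0 : n = 0
    · -- infinite cyclic generated by A
      right; left
      refine iso_of_range (zpowersHom KB A) ?_ ?_
      · rw [injective_iff_map_eq_one]
        intro z hz
        rw [zpowersHom_apply] at hz
        have := congrArg KB.v hz
        rw [zpow_v, one_v] at this
        have hAv : A.v = m := rfl
        rw [hAv] at this
        have hz0 : Multiplicative.toAdd z = 0 := by
          rcases mul_eq_zero.mp this with h | h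
          · exact h
          · exact absurd h hm0
        apply Multiplicative.toAdd.injective
        simpa using hz0
      · ext g
        simp only [MonoidHom.mem_range, zpowersHom_apply]
        constructor
        · rintro ⟨z, rfl⟩
          exact Γ.zpow_mem hA _
        · intro hg
          obtain ⟨p, q, hpq⟩ := decomp g hg
          refine ⟨Multiplicative.ofAdd q, ?_⟩
          rw [hpq, hn0]
          have : (⟨(0 : ℤ) * p, 0⟩ : KB) = 1 := by
            ext <;> simp [one_u, one_v]
          rw [this, one_mul]
          rfl
    · -- n ≠ 0
      have hnΓ : (⟨n, 0⟩ : KB) ∈ Γ := by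
        rw [hmemH, hHmem]; exact ⟨1, one_mul n⟩
      rcases Int.even_or_odd m with hm | hm
      · -- ℤ × ℤ
        right; right; left
        have hcomm : Commute (⟨n, 0⟩ : KB) A := by
          show (⟨n, 0⟩ : KB) * A = A * ⟨n, 0⟩
          ext
          · simp only [mul_u, e_zero, e_even hm]
            show n + 1 * a = a + e m * n; rw [e_even hm]; ring
          · simp only [mul_v]
            show (0 : ℤ) + m = m + 0; ring
        refine iso_of_range
          (MonoidHom.noncommCoprod (zpowersHom KB ⟨n, 0⟩) (zpowersHom KB A)
            (fun z w => by simpa only [zpowersHom_apply] using hcomm.zpow_zpow _ _)) ?_ ?_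
        · rw [injective_iff_map_eq_one]
          rintro ⟨z, w⟩ hz
          simp only [MonoidHom.noncommCoprod_apply, zpowersHom_apply] at hz
          rw [zpow_even (Even.zero), hAdef, zpow_even hm] at hz
          have h2 := congrArg KB.v hz
          simp only [mul_v, one_v, zero_mul, zero_add] at h2
          have hw0 : Multiplicative.toAdd w = 0 := by
            rcases mul_eq_zero.mp h2 with h | h
            · exact absurd h hm0
            · exact h
          have h1 := congrArg KB.u hz
          simp only [mul_u, one_u, zero_mul, e_zero, one_mul] at h1
          rw [hw0, mul_zero, add_zero] at h1
          have hz0 : Multiplicative.toAdd z = 0 := by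
            rcases mul_eq_zero.mp h1 with h | h
            · exact absurd h hn0
            · exact h
          refine Prod.ext ?_ ?_
          · apply Multiplicative.toAdd.injective; simpa using hz0
          · apply Multiplicative.toAdd.injective; simpa using hw0
        · ext g
          simp only [MonoidHom.mem_range, MonoidHom.noncommCoprod_apply, zpowersHom_apply]
          constructor
          · rintro ⟨⟨z, w⟩, rfl⟩
            exact Γ.mul_mem (Γ.zpow_mem hnΓ _) (Γ.zpow_mem hA _)
          · intro hg
            obtain ⟨p, q, hpq⟩ := decomp g hg
            refine ⟨(Multiplicative.ofAdd p, Multiplicative.ofAdd q), ?_⟩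
            rw [hpq]
            congr 1
            rw [zpow_even (Even.zero)]
            ext
            · show n * p = n * p; rfl
            · show (0 : ℤ) * p = 0; ring
      · -- Klein bottle itself
        right; right; right
        set ψ : KB →* KB :=
          { toFun := fun g => ⟨n * g.u + a * (g.v % 2), m * g.v⟩
            map_one' := by ext <;> simp [one_u, one_v]
            map_mul' := by
              intro g g'
              ext
              · show n * (g * g').u + a * ((g * g').v % 2)
                  = (⟨n * g.u + a * (g.v % 2), m * g.v⟩ : KB).u
                    + e (⟨n * g.u + a * (g.v % 2), m * g.v⟩ : KB).v
                      * (n * g'.u + a * (g'.v % 2))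
                simp only [mul_u, mul_v]
                rw [e_mul_odd hm]
                rcases Int.even_or_odd g.v with h | h
                · rw [e_even h]
                  have h0 : g.v % 2 = 0 := Int.even_iff.mp h
                  have h1 : (g.v + g'.v) % 2 = g'.v % 2 := by omega
                  rw [h0, h1]; ring
                · rw [e_odd h]
                  have h0 : g.v % 2 = 1 := Int.odd_iff.mp h
                  have h1 : (g.v + g'.v) % 2 = 1 - g'.v % 2 := by omega
                  rw [h0, h1]; ring
              · show m * (g * g').v
                  = (⟨n * g.u + a * (g.v % 2), m * g.v⟩ : KB).v + m * g'.v
                simp only [mul_v]; ring } with hψdef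
        refine iso_of_range ψ ?_ ?_
        · rw [injective_iff_map_eq_one]
          intro g hg
          have h1 := congrArg KB.u hg
          have h2 := congrArg KB.v hg
          simp only [hψdef, MonoidHom.coe_mk, OneHom.coe_mk, one_u, one_v] at h1 h2
          have hv0 : g.v = 0 := by
            rcases mul_eq_zero.mp h2 with h | h
            · exact absurd h hm0
            · exact h
          have hu0 : g.u = 0 := by
            rw [hv0] at h1
            simp at h1
            rcases h1 with h | h
            · exact absurd h hn0
            · exact h
          ext
          · rw [hu0, one_u]
          · rw [hv0, one_v]
        · ext g
          simp only [MonoidHom.mem_range]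
          constructor
          · rintro ⟨g', rfl⟩
            have key : ψ g' = (⟨n * g'.u, 0⟩ : KB) * A ^ g'.v := by
              rw [hAdef, zpow_odd hm]
              ext
              · show n * g'.u + a * (g'.v % 2) = n * g'.u + e 0 * (a * (g'.v % 2))
                rw [e_zero]; ring
              · show m * g'.v = 0 + m * g'.v; ring
            rw [key]
            refine Γ.mul_mem ?_ (Γ.zpow_mem hA _)
            have : (⟨n, 0⟩ : KB) ^ g'.u = ⟨n * g'.u, 0⟩ := by
              rw [zpow_even (Even.zero)]
              ext
              · rfl
              · show (0 : ℤ) * g'.u = 0; ring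
            rw [← this]
            exact Γ.zpow_mem hnΓ _
          · intro hg
            obtain ⟨p, q, hpq⟩ := decomp g hg
            refine ⟨⟨p, q⟩, ?_⟩
            rw [hpq]
            show (⟨n * p + a * (q % 2), m * q⟩ : KB) = ⟨n * p, 0⟩ * A ^ q
            rw [hAdef, zpow_odd hm]
            ext
            · show n * p + a * (q % 2) = n * p + e 0 * (a * (q % 2))
              rw [e_zero]; ring
            · show m * q = 0 + m * q; ring

end KBAux

/-- The Klein bottle group, presented as `⟨x, y ∣ y x y⁻¹ x⟩`
(i.e. `y x y⁻¹ = x⁻¹`), with `x = FreeGroup.of false` and `y = FreeGroup.of true`. -/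
def KleinBottleGroup : Type :=
  PresentedGroup ({FreeGroup.of true * FreeGroup.of false * (FreeGroup.of true)⁻¹ *
    FreeGroup.of false} : Set (FreeGroup Bool))

instance : Group KleinBottleGroup := by
  unfold KleinBottleGroup; infer_instance

namespace KBAux

abbrev rels : Set (FreeGroup Bool) :=
  {FreeGroup.of true * FreeGroup.of false * (FreeGroup.of true)⁻¹ * FreeGroup.of false}

def X : KB := ⟨1, 0⟩
def Y : KB := ⟨0, 1⟩

lemma X_zpow (z : ℤ) : X ^ z = ⟨z, 0⟩ := by
  unfold X
  rw [zpow_even Even.zero]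
  ext <;> simp

lemma Y_zpow (z : ℤ) : Y ^ z = ⟨0, z⟩ := by
  unfold Y
  rw [zpow_odd ⟨0, by ring⟩]
  ext <;> simp

def fgen : Bool → KB := fun b => cond b Y X

lemma hrels : ∀ r ∈ rels, FreeGroup.lift fgen r = 1 := by
  intro r hr
  rw [Set.mem_singleton_iff] at hr
  subst hr
  simp only [map_mul, map_inv, FreeGroup.lift_apply_of]
  show Y * X * Y⁻¹ * X = 1
  ext <;> norm_num [X, Y, mul_u, mul_v, inv_u, inv_v, one_u, one_v, e_zero, e_one]

def F : KleinBottleGroup →* KB := PresentedGroup.toGroup hrels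

def xK : KleinBottleGroup := PresentedGroup.of false
def yK : KleinBottleGroup := PresentedGroup.of true

lemma hFx : F xK = X := PresentedGroup.toGroup.of hrels
lemma hFy : F yK = Y := PresentedGroup.toGroup.of hrels

lemma relK : yK * xK * yK⁻¹ * xK = 1 := by
  have h : (FreeGroup.of true * FreeGroup.of false * (FreeGroup.of true)⁻¹ *
      FreeGroup.of false) ∈ Subgroup.normalClosure rels :=
    Subgroup.subset_normalClosure (Set.mem_singleton _)
  exact (QuotientGroup.eq_one_iff _).mpr h

lemma hconj : ∀ c : ℤ, yK * xK ^ c * yK⁻¹ = xK ^ (-c) := by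
  have h1 : yK * xK * yK⁻¹ = xK⁻¹ := mul_eq_one_iff_eq_inv.mp relK
  intro c
  calc yK * xK ^ c * yK⁻¹ = (MulAut.conj yK) (xK ^ c) := by rw [MulAut.conj_apply]
    _ = ((MulAut.conj yK) xK) ^ c := map_zpow _ _ _
    _ = (xK⁻¹) ^ c := by rw [MulAut.conj_apply, h1]
    _ = xK ^ (-c) := by rw [inv_zpow, ← zpow_neg]

lemma hconj' : ∀ c : ℤ, yK⁻¹ * xK ^ c * yK = xK ^ (-c) := by
  intro c
  have h := hconj (-c)
  rw [neg_neg] at h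
  calc yK⁻¹ * xK ^ c * yK = yK⁻¹ * (yK * xK ^ (-c) * yK⁻¹) * yK := by rw [h]
    _ = xK ^ (-c) := by group

lemma key : ∀ q c : ℤ, yK ^ q * xK ^ c = xK ^ (e q * c) * yK ^ q := by
  intro q
  induction q using Int.induction_on with
  | zero => intro c; rw [e_zero, one_mul]; simp
  | succ k ih =>
    intro c
    have hy : yK ^ ((k : ℤ) + 1) = yK ^ (k : ℤ) * yK := zpow_add_one yK k
    have hexp : e ((k : ℤ) + 1) * c = e (k : ℤ) * (-c) := by
      rw [e_add, e_one]; ring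
    rw [hy, hexp]
    calc yK ^ (k : ℤ) * yK * xK ^ c = yK ^ (k : ℤ) * (yK * xK ^ c * yK⁻¹) * yK := by group
      _ = yK ^ (k : ℤ) * xK ^ (-c) * yK := by rw [hconj]
      _ = xK ^ (e (k : ℤ) * (-c)) * yK ^ (k : ℤ) * yK := by rw [ih]
      _ = xK ^ (e (k : ℤ) * (-c)) * (yK ^ (k : ℤ) * yK) := by group
  | pred k ih =>
    intro c
    have hy : yK ^ (-(k : ℤ) - 1) = yK ^ (-(k : ℤ)) * yK⁻¹ := zpow_sub_one yK _
    have hexp : e (-(k : ℤ) - 1) * c = e (-(k : ℤ)) * (-c) := by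
      have h2 : (-(k : ℤ) - 1) = -(k : ℤ) + -1 := by ring
      have h3 : e (-1) = -1 := e_odd ⟨-1, by ring⟩
      rw [h2, e_add, h3]; ring
    rw [hy, hexp]
    calc yK ^ (-(k : ℤ)) * yK⁻¹ * xK ^ c
        = yK ^ (-(k : ℤ)) * (yK⁻¹ * xK ^ c * yK) * yK⁻¹ := by group
      _ = yK ^ (-(k : ℤ)) * xK ^ (-c) * yK⁻¹ := by rw [hconj']
      _ = xK ^ (e (-(k : ℤ)) * (-c)) * yK ^ (-(k : ℤ)) * yK⁻¹ := by rw [ih]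
      _ = xK ^ (e (-(k : ℤ)) * (-c)) * (yK ^ (-(k : ℤ)) * yK⁻¹) := by group

def B : KB →* KleinBottleGroup where
  toFun g := xK ^ g.u * yK ^ g.v
  map_one' := by
    show xK ^ (0 : ℤ) * yK ^ (0 : ℤ) = 1
    simp
  map_mul' := by
    intro g h
    show xK ^ (g.u + e g.v * h.u) * yK ^ (g.v + h.v)
      = xK ^ g.u * yK ^ g.v * (xK ^ h.u * yK ^ h.v)
    calc xK ^ (g.u + e g.v * h.u) * yK ^ (g.v + h.v)
        = xK ^ g.u * (xK ^ (e g.v * h.u) * yK ^ g.v) * yK ^ h.v := by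
          rw [zpow_add, zpow_add]; group
      _ = xK ^ g.u * (yK ^ g.v * xK ^ h.u) * yK ^ h.v := by rw [key]
      _ = xK ^ g.u * yK ^ g.v * (xK ^ h.u * yK ^ h.v) := by group

lemma hFB : ∀ g : KB, F (B g) = g := by
  intro g
  show F (xK ^ g.u * yK ^ g.v) = g
  rw [map_mul, map_zpow, map_zpow, hFx, hFy, X_zpow, Y_zpow]
  ext
  · show g.u + e 0 * 0 = g.u
    rw [e_zero]; ring
  · show (0 : ℤ) + g.v = g.v
    ring

lemma hBF : B.comp F = MonoidHom.id KleinBottleGroup := by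
  apply PresentedGroup.ext
  intro b
  cases b
  · show B (F xK) = xK
    rw [hFx]
    show xK ^ X.u * yK ^ X.v = xK
    show xK ^ (1 : ℤ) * yK ^ (0 : ℤ) = xK
    simp
  · show B (F yK) = yK
    rw [hFy]
    show xK ^ (0 : ℤ) * yK ^ (1 : ℤ) = yK
    simp

def kbEquiv : KleinBottleGroup ≃* KB :=
  MonoidHom.toMulEquiv F B hBF (MonoidHom.ext hFB)

end KBAux

/-- Every subgroup of the Klein bottle group `⟨x, y ∣ y x y⁻¹ = x⁻¹⟩` is isomorphic to the
trivial group, `ℤ`, `ℤ × ℤ`, or the Klein bottle group itself. -/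
theorem subgroup_of_kleinBottleGroup (Γ : Subgroup KleinBottleGroup) :
    Subsingleton Γ ∨ Nonempty (Γ ≃* Multiplicative ℤ) ∨
      Nonempty (Γ ≃* Multiplicative ℤ × Multiplicative ℤ) ∨
      Nonempty (Γ ≃* KleinBottleGroup) := by
  have eΓ := KBAux.kbEquiv.subgroupMap Γ
  rcases KBAux.kb_subgroup (Subgroup.map (KBAux.kbEquiv : KleinBottleGroup →* KBAux.KB) Γ)
    with h | he | he | he
  · left
    haveI := h
    exact Equiv.subsingleton eΓ.toEquiv
  · right; left; exact he.map (fun e => eΓ.trans e)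
  · right; right; left; exact he.map (fun e => eΓ.trans e)
  · right; right; right; exact he.map (fun e => (eΓ.trans e).trans KBAux.kbEquiv.symm)
end

section
/- Every subgroup of G = ℤ ⋊_φ ℤ (for any action φ) is isomorphic to one of: the trivial group, ℤ, ℤ × ℤ, or ℤ ⋊ ℤ with the negation action. -/
open Function

/-- The action of `ℤ` on `ℤ` by negation (inversion, written multiplicatively). -/
noncomputable def negationAction : Multiplicative ℤ →* MulAut (Multiplicative ℤ) :=
  zpowersHom (MulAut (Multiplicative ℤ)) (MulEquiv.inv (Multiplicative ℤ))

/-- A group generated by an element of infinite order is `Multiplicative ℤ`. -/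
lemma aux_isoInt {H : Type*} [Group H] (g : H)
    (hgen : ∀ x : H, ∃ n : ℤ, x = g ^ n)
    (hord : ∀ m : ℤ, g ^ m = 1 → m = 0) :
    Nonempty (H ≃* Multiplicative ℤ) := by
  have hinj : Function.Injective (zpowersHom H g) := by
    rw [injective_iff_map_eq_one]
    intro n hn
    have := hord (Multiplicative.toAdd n) hn
    exact Multiplicative.toAdd.injective this
  have hsurj : Function.Surjective (zpowersHom H g) := fun x => by
    obtain ⟨n, rfl⟩ := hgen x; exact ⟨Multiplicative.ofAdd n, rfl⟩
  exact ⟨(MulEquiv.ofBijective _ ⟨hinj, hsurj⟩).symm⟩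

/-- A group embedding into `ℤ` is trivial or infinite cyclic. -/
lemma aux_cyclic_struct {H : Type*} [Group H] (f : H →* Multiplicative ℤ)
    (hf : Function.Injective f) :
    Subsingleton H ∨ ∃ a : H, (∀ x : H, ∃ n : ℤ, x = a ^ n) ∧ ∀ m : ℤ, a ^ m = 1 → m = 0 := by
  obtain ⟨k, hk⟩ := Int.subgroup_cyclic (Subgroup.toAddSubgroup' f.range)
  have hmem : ∀ x : H, ∃ n : ℤ, n * k = Multiplicative.toAdd (f x) := by
    intro x
    have hx : Multiplicative.toAdd (f x) ∈ Subgroup.toAddSubgroup' f.range := ⟨x, rfl⟩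
    rw [hk, AddSubgroup.mem_closure_singleton] at hx
    simpa [smul_eq_mul] using hx
  rcases eq_or_ne k 0 with rfl | hk0
  · left
    refine subsingleton_of_forall_eq 1 fun x => ?_
    obtain ⟨n, hn⟩ := hmem x
    apply hf
    simp only [map_one]
    have h0 : Multiplicative.toAdd (f x) = 0 := by omega
    have := congrArg Multiplicative.ofAdd h0
    simpa using this
  · right
    have hkmem : Multiplicative.ofAdd k ∈ f.range := by
      have : k ∈ Subgroup.toAddSubgroup' f.range := by
        rw [hk]; exact AddSubgroup.mem_closure_singleton.2 ⟨1, one_smul _ _⟩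
      exact this
    obtain ⟨a, ha⟩ := hkmem
    refine ⟨a, fun x => ?_, fun m hm => ?_⟩
    · obtain ⟨n, hn⟩ := hmem x
      refine ⟨n, hf ?_⟩
      rw [map_zpow, ha]
      apply Multiplicative.toAdd.injective
      simpa [smul_eq_mul] using hn.symm
    · have : f (a ^ m) = 1 := by rw [hm, map_one]
      rw [map_zpow, ha] at this
      have h2 : m * k = 0 := by
        have := congrArg Multiplicative.toAdd this
        simpa [smul_eq_mul] using this
      exact (mul_eq_zero.1 h2).resolve_right hk0

/-- A group generated by two commuting independent infinite-order elements is `ℤ × ℤ`. -/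
lemma aux_isoProd {H : Type*} [Group H] (a g : H) (hc : Commute a g)
    (hgen : ∀ x : H, ∃ m n : ℤ, x = a ^ m * g ^ n)
    (hinj : ∀ m n : ℤ, a ^ m * g ^ n = 1 → m = 0 ∧ n = 0) :
    Nonempty (H ≃* Multiplicative ℤ × Multiplicative ℤ) := by
  let F : Multiplicative ℤ × Multiplicative ℤ →* H :=
    MonoidHom.noncommCoprod (zpowersHom H a) (zpowersHom H g)
      (fun m n => (hc.zpow_zpow _ _))
  have hF : ∀ x : Multiplicative ℤ × Multiplicative ℤ,
      F x = a ^ Multiplicative.toAdd x.1 * g ^ Multiplicative.toAdd x.2 := fun x => rfl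
  have hFi : Function.Injective F := by
    rw [injective_iff_map_eq_one]
    intro x hx
    rw [hF] at hx
    obtain ⟨h1, h2⟩ := hinj _ _ hx
    ext
    · exact h1
    · exact h2
  have hFs : Function.Surjective F := by
    intro x
    obtain ⟨m, n, rfl⟩ := hgen x
    exact ⟨(Multiplicative.ofAdd m, Multiplicative.ofAdd n), rfl⟩
  exact ⟨(MulEquiv.ofBijective F ⟨hFi, hFs⟩).symm⟩

lemma aux_aut_zpow {M : Type*} [Group M] (σ : MulAut M) (m : M) (h1 : σ m = m⁻¹) :
    ∀ j : ℤ, (σ ^ j) m = m ^ ((((-1 : ℤˣ) ^ j : ℤˣ) : ℤ)) := by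
  have h2 : σ⁻¹ m = m⁻¹ := by
    apply σ.injective
    rw [MulAut.apply_inv_self, map_inv, h1, inv_inv]
  intro j
  induction j using Int.induction_on with
  | zero => simp
  | succ i ih =>
    have : σ ^ ((i : ℤ) + 1) = σ ^ (i : ℤ) * σ := by rw [zpow_add_one]
    rw [this, MulAut.mul_apply, h1, map_inv, ih, ← zpow_neg]
    congr 1
    push_cast [zpow_add_one]
    ring
  | pred i ih =>
    have : σ ^ (-(i : ℤ) - 1) = σ ^ (-(i : ℤ)) * σ⁻¹ := by rw [zpow_sub_one]
    rw [this, MulAut.mul_apply, h2, map_inv, ih, ← zpow_neg]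
    congr 1
    push_cast [zpow_sub_one]
    simp

lemma aux_negationAction_apply (n m : Multiplicative ℤ) :
    negationAction n m = m ^ ((((-1 : ℤˣ) ^ Multiplicative.toAdd n : ℤˣ) : ℤ)) := by
  have : negationAction n = (MulEquiv.inv (Multiplicative ℤ)) ^ (Multiplicative.toAdd n) := rfl
  rw [this]
  exact aux_aut_zpow _ m rfl _

/-- A group generated by two independent infinite-order elements, one conjugating the other
to its inverse, is the Klein bottle group. -/
lemma aux_isoKlein {H : Type*} [Group H] (a g : H) (hconj : g * a * g⁻¹ = a⁻¹)
    (hgen : ∀ x : H, ∃ m n : ℤ, x = a ^ m * g ^ n)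
    (hinj : ∀ m n : ℤ, a ^ m * g ^ n = 1 → m = 0 ∧ n = 0) :
    Nonempty (H ≃* Multiplicative ℤ ⋊[negationAction] Multiplicative ℤ) := by
  have h1 : MulAut.conj g a = a⁻¹ := by simpa using hconj
  have hc : ∀ j : ℤ, MulAut.conj (g ^ j) a = a ^ ((((-1 : ℤˣ) ^ j : ℤˣ) : ℤ)) := by
    intro j
    rw [map_zpow]
    exact aux_aut_zpow _ _ h1 j
  have compat : ∀ n : Multiplicative ℤ,
      (zpowersHom H a).comp (negationAction n).toMonoidHom =
        (MulAut.conj ((zpowersHom H g) n)).toMonoidHom.comp (zpowersHom H a) := by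
    intro n
    ext
    simp only [MonoidHom.comp_apply, MulEquiv.coe_toMonoidHom, zpowersHom_apply]
    rw [aux_negationAction_apply, toAdd_zpow, map_zpow, hc, smul_eq_mul, zpow_mul]
  let F : Multiplicative ℤ ⋊[negationAction] Multiplicative ℤ →* H :=
    SemidirectProduct.lift (zpowersHom H a) (zpowersHom H g) compat
  have hF : ∀ x : Multiplicative ℤ ⋊[negationAction] Multiplicative ℤ,
      F x = a ^ Multiplicative.toAdd x.left * g ^ Multiplicative.toAdd x.right := fun x => rfl
  have hFi : Function.Injective F := by
    rw [injective_iff_map_eq_one]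
    intro x hx
    rw [hF] at hx
    obtain ⟨hl, hr⟩ := hinj _ _ hx
    ext
    · exact hl
    · exact hr
  have hFs : Function.Surjective F := by
    intro x
    obtain ⟨m, n, rfl⟩ := hgen x
    exact ⟨⟨Multiplicative.ofAdd m, Multiplicative.ofAdd n⟩, rfl⟩
  exact ⟨(MulEquiv.ofBijective F ⟨hFi, hFs⟩).symm⟩

/-- Every subgroup of a semidirect product `ℤ ⋊_φ ℤ`, for an arbitrary action
`φ : ℤ → Aut ℤ`, is isomorphic to the trivial group, `ℤ`, `ℤ × ℤ`, or the Klein bottle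
group `ℤ ⋊ ℤ` with the negation action. -/
theorem subgroup_of_z_semidirect_z (φ : Multiplicative ℤ →* MulAut (Multiplicative ℤ))
    (Γ : Subgroup (Multiplicative ℤ ⋊[φ] Multiplicative ℤ)) :
    Subsingleton Γ ∨ Nonempty (Γ ≃* Multiplicative ℤ) ∨
      Nonempty (Γ ≃* Multiplicative ℤ × Multiplicative ℤ) ∨
      Nonempty (Γ ≃* Multiplicative ℤ ⋊[negationAction] Multiplicative ℤ) := by
  set p : Γ →* Multiplicative ℤ := SemidirectProduct.rightHom.comp Γ.subtype with hpdef
  -- the kernel of `p` embeds into `ℤ` via the left coordinate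
  let ι : p.ker →* Multiplicative ℤ :=
    { toFun := fun x => x.1.1.left
      map_one' := rfl
      map_mul' := fun x y => by
        have hx : x.1.1.right = 1 := x.2
        show (x.1.1 * y.1.1).left = x.1.1.left * y.1.1.left
        rw [SemidirectProduct.mul_left, hx, map_one]
        rfl }
  have hι : Function.Injective ι := by
    rw [injective_iff_map_eq_one]
    intro x hx
    have hr : x.1.1.right = 1 := x.2
    have hl : x.1.1.left = 1 := hx
    apply Subtype.val_injective
    apply Subtype.val_injective
    exact SemidirectProduct.ext hl hr
  rcases aux_cyclic_struct ι hι with hK | ⟨a, hagen, haord⟩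
  · -- trivial kernel: Γ embeds in ℤ
    have hpinj : Function.Injective p := by
      rw [injective_iff_map_eq_one]
      intro x hx
      have : (⟨x, hx⟩ : p.ker) = (1 : p.ker) := Subsingleton.elim _ _
      exact congrArg Subtype.val this
    rcases aux_cyclic_struct p hpinj with h | ⟨g, hgen, hord⟩
    · exact Or.inl h
    · exact Or.inr (Or.inl (aux_isoInt g hgen hord))
  · -- nontrivial kernel, generated by a' := a
    set a' : Γ := (a : Γ) with ha'def
    have ha'mem : ∀ x : Γ, p x = 1 → ∃ m : ℤ, x = a' ^ m := by
      intro x hx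
      obtain ⟨m, hm⟩ := hagen ⟨x, hx⟩
      refine ⟨m, ?_⟩
      have := congrArg Subtype.val hm
      simpa using this
    have ha'ord : ∀ m : ℤ, a' ^ m = 1 → m = 0 := by
      intro m hm
      apply haord m
      apply Subtype.val_injective
      simpa using hm
    rcases aux_cyclic_struct p.range.subtype p.range.subtype_injective with hR | ⟨d, hdgen, hdord⟩
    · -- trivial image: Γ is the kernel
      have hall : ∀ x : Γ, p x = 1 := by
        intro x
        have : (⟨p x, ⟨x, rfl⟩⟩ : p.range) = (⟨1, one_mem _⟩ : p.range) := Subsingleton.elim _ _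
        exact congrArg Subtype.val this
      exact Or.inr (Or.inl (aux_isoInt a' (fun x => ha'mem x (hall x)) ha'ord))
    · -- both nontrivial
      obtain ⟨γ, hγ⟩ := d.2
      have hdne : ∀ n : ℤ, (d : Multiplicative ℤ) ^ n = 1 → n = 0 := by
        intro n hn
        apply hdord n
        apply Subtype.val_injective
        simpa using hn
      have hgenΓ : ∀ x : Γ, ∃ m n : ℤ, x = a' ^ m * γ ^ n := by
        intro x
        obtain ⟨n, hn⟩ := hdgen ⟨p x, ⟨x, rfl⟩⟩
        have hpx : p x = (d : Multiplicative ℤ) ^ n := by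
          have := congrArg Subtype.val hn
          simpa using this
        have h1 : p (x * (γ ^ n)⁻¹) = 1 := by
          rw [map_mul, map_inv, map_zpow, hγ, hpx, mul_inv_cancel]
        obtain ⟨m, hm⟩ := ha'mem _ h1
        refine ⟨m, n, ?_⟩
        rw [← hm]
        group
      have hpa' : p a' = 1 := a.2
      have hinjΓ : ∀ m n : ℤ, a' ^ m * γ ^ n = 1 → m = 0 ∧ n = 0 := by
        intro m n h
        have h2 : (d : Multiplicative ℤ) ^ n = 1 := by
          have hh := congrArg p h
          rw [map_mul, map_zpow, map_zpow, hpa', one_zpow, one_mul, map_one, hγ] at hh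
          exact hh
        have hn0 : n = 0 := hdne n h2
        subst hn0
        rw [zpow_zero, mul_one] at h
        exact ⟨ha'ord m h, rfl⟩
      -- conjugation of a' by γ is a power of a'
      have hmem1 : p (γ * a' * γ⁻¹) = 1 := by
        rw [map_mul, map_mul, map_inv, hpa', mul_one, mul_inv_cancel]
      obtain ⟨s, hs⟩ := ha'mem _ hmem1
      have hmem2 : p (γ⁻¹ * a' * γ) = 1 := by
        rw [map_mul, map_mul, map_inv, hpa', mul_one, inv_mul_cancel]
      obtain ⟨t, ht⟩ := ha'mem _ hmem2
      have e1 : a' = γ⁻¹ * a' ^ s * γ := by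
        rw [← hs]
        group
      have e2 : γ⁻¹ * a' ^ s * γ = (γ⁻¹ * a' * γ) ^ s := by
        have := map_zpow (MulAut.conj γ⁻¹) a' s
        simpa [MulAut.conj_apply] using this
      have key : a' = a' ^ (t * s) := by
        rw [e2, ht, ← zpow_mul] at e1
        exact e1
      have hts : t * s = 1 := by
        have hz : a' ^ (t * s - 1) = 1 := by
          rw [zpow_sub, zpow_one, ← key, mul_inv_cancel]
        have := ha'ord _ hz
        omega
      have hs1 : s = 1 ∨ s = -1 := by
        refine Int.isUnit_iff.1 (IsUnit.of_mul_eq_one (a := s) t ?_)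
        rw [mul_comm]; exact hts
      rcases hs1 with rfl | rfl
      · -- abelian case
        have hcomm : Commute a' γ := by
          rw [zpow_one] at hs
          have : γ * a' = a' * γ := by
            have := congrArg (· * γ) hs
            simpa [mul_assoc] using this
          exact this.symm
        exact Or.inr (Or.inr (Or.inl (aux_isoProd a' γ hcomm hgenΓ hinjΓ)))
      · -- Klein bottle case
        have hcj : γ * a' * γ⁻¹ = a'⁻¹ := by
          rw [hs, zpow_neg_one]
        exact Or.inr (Or.inr (Or.inr (aux_isoKlein a' γ hcj hgenΓ hinjΓ)))
end
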